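/- Let 𝔤 be the 4-dimensional real Lie algebra e(2) ⊕ ℝ with basis e₁, e₂, e₃, e₄ and nonzero brackets [e₁,e₃] = e₂, [e₂,e₃] = −e₁ (all other brackets of basis elements are zero). An alternating ℝ-bilinear form F : 𝔤 × 𝔤 → ℝ is a 2-cocycle of 𝔤 if and only if F(e₁,e₄) = 0 and F(e₂,e₄) = 0; equivalently, if and only if F = μ₁ e¹∧e² + μ₂ e³∧e⁴ + μ₃ e¹∧e³ + μ₄ e²∧e³ where μ₁ = F(e₁,e₂), μ₂ = F(e₃,e₄), μ₃ = F(e₁,e₃), μ₄ = F(e₂,e₃) and {eᵃ} is the dual basis. -/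

import Mathlib

/-!
The centre of `e(2) ⊕ ℝ` contains `e₄` and the derived algebra is spanned by `e₁, e₂`, so the
cocycle identity at `(x, y, e₄)` reduces to `F([x, y], e₄) = 0`, that is, to
`F(e₁, e₄) = F(e₂, e₄) = 0`. Conversely, once these two components vanish, the cocycle identity
for the remaining four components is a polynomial identity in the coordinates.
-/
noncomputable section

/-- The Lie bracket of the Lie algebra `e(2) ⊕ ℝ` on `ℝ⁴`, in the basis
`e₁ = e 0, e₂ = e 1, e₃ = e 2, e₄ = e 3` with nonzero brackets
`[e₁,e₃] = e₂`, `[e₂,e₃] = -e₁`. -/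
def bra (x y : Fin 4 → ℝ) : Fin 4 → ℝ :=
  ![-(x 1 * y 2 - x 2 * y 1), x 0 * y 2 - x 2 * y 0, 0, 0]

/-- The standard basis `e₁, e₂, e₃, e₄` (indexed from `0`). -/
def e (a : Fin 4) : Fin 4 → ℝ := Pi.single a 1

/-- `F` is a 2-cocycle of `e(2) ⊕ ℝ` with values in `ℝ`. -/
def IsCocycle (F : (Fin 4 → ℝ) →ₗ[ℝ] (Fin 4 → ℝ) →ₗ[ℝ] ℝ) : Prop :=
  ∀ x y z : Fin 4 → ℝ, F (bra x y) z + F (bra y z) x + F (bra z x) y = 0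

theorem LinearMap.apply_eq_sum_sum_single {R n : Type*} [CommRing R] [Fintype n] [DecidableEq n]
    (B : (n → R) →ₗ[R] (n → R) →ₗ[R] R) (x y : n → R) :
    B x y = ∑ i, ∑ j, x i * y j * B (Pi.single i 1) (Pi.single j 1) := by
  conv_lhs => rw [← Matrix.toLinearMap₂'_toMatrix' (R := R) B]
  simp only [Matrix.toLinearMap₂'_apply, LinearMap.toMatrix₂'_apply, smul_eq_mul, mul_assoc]

theorem LinearMap.IsAlt.apply_fin_four {R : Type*} [CommRing R]
    {B : (Fin 4 → R) →ₗ[R] (Fin 4 → R) →ₗ[R] R} (hB : B.IsAlt) (x y : Fin 4 → R) :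
    B x y = B (Pi.single 0 1) (Pi.single 1 1) * (x 0 * y 1 - x 1 * y 0)
      + B (Pi.single 0 1) (Pi.single 2 1) * (x 0 * y 2 - x 2 * y 0)
      + B (Pi.single 0 1) (Pi.single 3 1) * (x 0 * y 3 - x 3 * y 0)
      + B (Pi.single 1 1) (Pi.single 2 1) * (x 1 * y 2 - x 2 * y 1)
      + B (Pi.single 1 1) (Pi.single 3 1) * (x 1 * y 3 - x 3 * y 1)
      + B (Pi.single 2 1) (Pi.single 3 1) * (x 2 * y 3 - x 3 * y 2) := by
  rw [B.apply_eq_sum_sum_single]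
  simp only [Fin.sum_univ_four, hB.self_eq_zero]
  rw [← hB.neg (Pi.single 0 1) (Pi.single 1 1), ← hB.neg (Pi.single 0 1) (Pi.single 2 1),
    ← hB.neg (Pi.single 0 1) (Pi.single 3 1), ← hB.neg (Pi.single 1 1) (Pi.single 2 1),
    ← hB.neg (Pi.single 1 1) (Pi.single 3 1), ← hB.neg (Pi.single 2 1) (Pi.single 3 1)]
  ring

theorem bra_e_three_right (x : Fin 4 → ℝ) : bra x (e 3) = 0 := by
  funext i; fin_cases i <;> simp [bra, e]

theorem bra_e_three_left (x : Fin 4 → ℝ) : bra (e 3) x = 0 := by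
  funext i; fin_cases i <;> simp [bra, e]

theorem bra_e_zero_e_two : bra (e 0) (e 2) = e 1 := by
  funext i; fin_cases i <;> simp [bra, e]

theorem bra_e_one_e_two : bra (e 1) (e 2) = -e 0 := by
  funext i; fin_cases i <;> simp [bra, e]

section IsCocycle

variable {F : (Fin 4 → ℝ) →ₗ[ℝ] (Fin 4 → ℝ) →ₗ[ℝ] ℝ}

theorem IsCocycle.apply_bra_e_three (hF : IsCocycle F) (x y : Fin 4 → ℝ) :
    F (bra x y) (e 3) = 0 := by
  simpa [bra_e_three_left, bra_e_three_right] using hF x y (e 3)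

theorem IsCocycle.apply_e_zero_e_three (hF : IsCocycle F) : F (e 0) (e 3) = 0 := by
  simpa [bra_e_one_e_two] using hF.apply_bra_e_three (e 1) (e 2)

theorem IsCocycle.apply_e_one_e_three (hF : IsCocycle F) : F (e 1) (e 3) = 0 := by
  simpa [bra_e_zero_e_two] using hF.apply_bra_e_three (e 0) (e 2)

theorem isCocycle_of_isAlt (hF : F.IsAlt) (h₀ : F (e 0) (e 3) = 0) (h₁ : F (e 1) (e 3) = 0) :
    IsCocycle F := by
  intro x y z
  unfold e at h₀ h₁
  rw [hF.apply_fin_four (bra x y), hF.apply_fin_four (bra y z), hF.apply_fin_four (bra z x),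
    h₀, h₁]
  simp only [bra, Matrix.cons_val]
  ring

theorem isCocycle_iff_of_isAlt (hF : F.IsAlt) :
    IsCocycle F ↔ F (e 0) (e 3) = 0 ∧ F (e 1) (e 3) = 0 :=
  ⟨fun h ↦ ⟨h.apply_e_zero_e_three, h.apply_e_one_e_three⟩,
    fun ⟨h₀, h₁⟩ ↦ isCocycle_of_isAlt hF h₀ h₁⟩

end IsCocycle

/-- an alternating bilinear form `F` on `e(2) ⊕ ℝ` is a 2-cocycle iff
`F(e₁,e₄) = 0` and `F(e₂,e₄) = 0`; equivalently, iff
`F = μ₁ e¹∧e² + μ₂ e³∧e⁴ + μ₃ e¹∧e³ + μ₄ e²∧e³` with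
`μ₁ = F(e₁,e₂)`, `μ₂ = F(e₃,e₄)`, `μ₃ = F(e₁,e₃)`, `μ₄ = F(e₂,e₃)`. -/
theorem two_cocycles_of_e2_plus_R
    (F : (Fin 4 → ℝ) →ₗ[ℝ] (Fin 4 → ℝ) →ₗ[ℝ] ℝ)
    (hFalt : ∀ x : Fin 4 → ℝ, F x x = 0) :
    (IsCocycle F ↔ (F (e 0) (e 3) = 0 ∧ F (e 1) (e 3) = 0)) ∧
    (IsCocycle F ↔ ∀ x y : Fin 4 → ℝ,
        F x y = F (e 0) (e 1) * (x 0 * y 1 - x 1 * y 0)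
              + F (e 2) (e 3) * (x 2 * y 3 - x 3 * y 2)
              + F (e 0) (e 2) * (x 0 * y 2 - x 2 * y 0)
              + F (e 1) (e 2) * (x 1 * y 2 - x 2 * y 1)) := by
  have hF : F.IsAlt := hFalt
  refine ⟨isCocycle_iff_of_isAlt hF,
    (isCocycle_iff_of_isAlt hF).trans ⟨fun ⟨h₀, h₁⟩ x y ↦ ?_, fun h ↦ ⟨?_, ?_⟩⟩⟩
  · unfold e at h₀ h₁ ⊢
    rw [hF.apply_fin_four x y, h₀, h₁]
    ring
  · simpa [e] using h (e 0) (e 3)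
  · simpa [e] using h (e 1) (e 3)
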